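/- arXiv:2603.18665 — 5 statements merged into one kernel-verified Lean document; each statement's English description precedes it below -/
import Mathlib

section
/- Let E ∈ ℝ^{d'×d} be a column-stochastic matrix and let p ∈ Δ^{d-1}, q ∈ Δ^{d'-1} be probability vectors. Then the following are equivalent: (2) there exist vectors a ∈ ℝ^{d'} and b ∈ ℝ^{d} with all entries positive such that the matrix D_a E D_b has row sums equal to q and column sums equal to p; (3) there exists a matrix B ∈ ℝ^{d'×d} with nonnegative entries, row sums equal to q and column sums equal to p, such that B_{y,x} > 0 whenever E_{y,x} > 0 and B_{y,x} = 0 whenever E_{y,x} = 0. -/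
/-!
For the nontrivial direction, minimise the convex dual
`F(α, β) = ∑ E y x * exp (α y + β x) - B y x * (α y + β x)`: its partial derivatives in `α y` and
`β x` are the row and column sums of `diagonal (exp ∘ α) * E * diagonal (exp ∘ β)` minus those of
`B`, so a minimiser yields the scaling `a = exp ∘ α`, `b = exp ∘ β`. A minimiser exists because
`F` depends on `(α, β)` only through the edge values `α y + β x` on the support of `E`, where
`B > 0` makes each term `E y x * exp s - B y x * s` coercive; a coercive continuous function
attains its minimum on the closed subspace of such edge vectors.
-/

open Matrix BigOperators

/-- A column-stochastic matrix: nonnegative entries, each column sums to 1. -/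
def ColStochastic {d' d : ℕ} (E : Matrix (Fin d') (Fin d) ℝ) : Prop :=
  (∀ y x, 0 ≤ E y x) ∧ ∀ x, ∑ y, E y x = 1

/-- A probability vector: nonnegative entries summing to 1. -/
def ProbVec {d : ℕ} (p : Fin d → ℝ) : Prop :=
  (∀ x, 0 ≤ p x) ∧ ∑ x, p x = 1

open Filter Real

lemma le_mul_exp_sub_mul {A C : ℝ} (hA : 0 < A) (hC : 0 < C) (s : ℝ) :
    C * (1 + log (A / C)) ≤ A * exp s - C * s := by
  have hshift : A * exp s = C * exp (s + log (A / C)) := by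
    rw [exp_add, exp_log (by positivity)]
    field_simp
  nlinarith [mul_le_mul_of_nonneg_left (add_one_le_exp (s + log (A / C))) hC.le]

lemma tendsto_mul_exp_sub_mul_cocompact {A C : ℝ} (hA : 0 < A) (hC : 0 < C) :
    Tendsto (fun s => A * exp s - C * s) (cocompact ℝ) atTop := by
  rw [cocompact_eq_atBot_atTop, tendsto_sup]
  constructor
  · refine tendsto_atTop_mono (fun s => ?_) (tendsto_neg_atBot_atTop.const_mul_atTop hC)
    nlinarith [exp_pos s]
  · -- half of `A * exp s` already dominates `C * s`
    refine tendsto_atTop_mono (fun s => ?_) (tendsto_atTop_add_const_right _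
      (C * (1 + log (A / 2 / C))) (tendsto_exp_atTop.const_mul_atTop (half_pos hA)))
    linarith [le_mul_exp_sub_mul (half_pos hA) hC s]

lemma tendsto_sum_comp_eval_cocompact {ι : Type*} [Fintype ι] {X : ι → Type*}
    [∀ i, TopologicalSpace (X i)] (φ : ∀ i, X i → ℝ) (hbdd : ∀ i, BddBelow (Set.range (φ i)))
    (hφ : ∀ i, Tendsto (φ i) (cocompact (X i)) atTop) :
    Tendsto (fun s : ∀ i, X i => ∑ i, φ i (s i)) (cocompact (∀ i, X i)) atTop := by
  classical
  choose k hk using hbdd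
  rw [← coprodᵢ_cocompact, Filter.coprodᵢ, tendsto_iSup]
  intro i
  refine tendsto_atTop_mono (fun s => ?_)
    (tendsto_atTop_add_const_right _ (∑ j ∈ Finset.univ.erase i, k j) ((hφ i).comp tendsto_comap))
  rw [← Finset.add_sum_erase _ _ (Finset.mem_univ i)]
  exact add_le_add_right (Finset.sum_le_sum fun j _ => hk j ⟨s j, rfl⟩) _

lemma LinearMap.exists_forall_le_comp_of_tendsto_cocompact {V W : Type*} [AddCommGroup V]
    [Module ℝ V] [NormedAddCommGroup W] [NormedSpace ℝ W] [FiniteDimensional ℝ W]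
    (L : V →ₗ[ℝ] W) {G : W → ℝ} (hG : Continuous G) (hlim : Tendsto G (cocompact W) atTop) :
    ∃ v, ∀ v', G (L v) ≤ G (L v') := by
  obtain ⟨⟨_, v, rfl⟩, hv⟩ := (hG.comp continuous_subtype_val).exists_forall_le
    (hlim.comp (L.range.closed_of_finiteDimensional.isClosedEmbedding_subtypeVal.tendsto_cocompact))
  exact ⟨v, fun v' => hv ⟨L v', v', rfl⟩⟩

lemma sum_apply_update_sub_sum {ι α M : Type*} [Fintype ι] [DecidableEq ι] [AddCommGroup M]
    (f : ι → α → M) (g : ι → α) (i : ι) (a : α) :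
    ∑ j, f j (Function.update g i a j) - ∑ j, f j (g j) = f i a - f i (g i) := by
  rw [← Finset.sum_sub_distrib, Fintype.sum_eq_single i fun j hj => by
    rw [Function.update_of_ne hj, sub_self]]
  simp

section Sinkhorn

variable {m n : Type*} [Fintype m] [Fintype n]

noncomputable def sinkhornDual (E B : Matrix m n ℝ) (α : m → ℝ) (β : n → ℝ) : ℝ :=
  ∑ y, ∑ x, (E y x * exp (α y + β x) - B y x * (α y + β x))

lemma sinkhornDual_transpose (E B : Matrix m n ℝ) (α : m → ℝ) (β : n → ℝ) :
    sinkhornDual Eᵀ Bᵀ β α = sinkhornDual E B α β := by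
  simp only [sinkhornDual, transpose_apply, add_comm (β _)]
  exact Finset.sum_comm

lemma exists_forall_sinkhornDual_le {E B : Matrix m n ℝ} (hE : ∀ y x, 0 ≤ E y x)
    (hEB : ∀ y x, 0 < E y x → 0 < B y x) (hBE : ∀ y x, E y x = 0 → B y x = 0) :
    ∃ α β, ∀ α' β', sinkhornDual E B α β ≤ sinkhornDual E B α' β' := by
  classical
  let ι := {z : m × n // 0 < E z.1 z.2}
  let L : (m → ℝ) × (n → ℝ) →ₗ[ℝ] ι → ℝ := LinearMap.pi fun e : ι =>
    LinearMap.proj (R := ℝ) (φ := fun _ : m => ℝ) e.1.1 ∘ₗ LinearMap.fst ℝ _ _ +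
      LinearMap.proj (R := ℝ) (φ := fun _ : n => ℝ) e.1.2 ∘ₗ LinearMap.snd ℝ _ _
  let φ : ι → ℝ → ℝ := fun e s => E e.1.1 e.1.2 * exp s - B e.1.1 e.1.2 * s
  have hdual : ∀ α β, sinkhornDual E B α β = ∑ e, φ e (L (α, β) e) := by
    intro α β
    rw [sinkhornDual, ← Fintype.sum_prod_type',
      ← Fintype.sum_subtype_add_sum_subtype (fun z : m × n => 0 < E z.1 z.2)]
    refine (add_eq_left.2 (Finset.sum_eq_zero fun z _ => ?_)).trans rfl
    have hz : E z.1.1 z.1.2 = 0 := le_antisymm (not_lt.1 z.2) (hE _ _)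
    simp [hz, hBE _ _ hz]
  have hcont : Continuous fun s : ι → ℝ => ∑ e, φ e (s e) := by fun_prop
  have hlim := tendsto_sum_comp_eval_cocompact φ
    (fun e => ⟨_, Set.forall_mem_range.2 (le_mul_exp_sub_mul e.2 (hEB _ _ e.2))⟩)
    (fun e => tendsto_mul_exp_sub_mul_cocompact e.2 (hEB _ _ e.2))
  obtain ⟨⟨α, β⟩, hmin⟩ := L.exists_forall_le_comp_of_tendsto_cocompact hcont hlim
  exact ⟨α, β, fun α' β' => by simpa only [hdual] using hmin (α', β')⟩

lemma sum_mul_exp_eq_of_forall_sinkhornDual_le {E B : Matrix m n ℝ} {α : m → ℝ} {β : n → ℝ}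
    (hmin : ∀ α', sinkhornDual E B α β ≤ sinkhornDual E B α' β) (y : m) :
    ∑ x, E y x * exp (α y + β x) = ∑ x, B y x := by
  classical
  set φ : m → ℝ → ℝ := fun y a => ∑ x, (E y x * exp (a + β x) - B y x * (a + β x))
  have hφmin : IsLocalMin (φ y) (α y) := Eventually.of_forall fun a => by
    have hle : ∑ j, φ j (α j) ≤ ∑ j, φ j (Function.update α y a j) := hmin _
    linarith [sum_apply_update_sub_sum φ α y a]
  have hderiv : HasDerivAt (φ y) (∑ x, (E y x * exp (α y + β x) - B y x)) (α y) := by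
    refine HasDerivAt.fun_sum fun x _ => ?_
    have hlin := (hasDerivAt_id (α y)).add_const (β x)
    simpa using (hlin.exp.const_mul (E y x)).fun_sub (hlin.const_mul (B y x))
  rw [← sub_eq_zero, ← Finset.sum_sub_distrib]
  exact hφmin.hasDerivAt_eq_zero hderiv

variable [DecidableEq m] [DecidableEq n]

lemma mulVec_one_eq_of_forall_sinkhornDual_le {E B : Matrix m n ℝ} {α : m → ℝ} {β : n → ℝ}
    (hmin : ∀ α', sinkhornDual E B α β ≤ sinkhornDual E B α' β) :
    (diagonal (exp ∘ α) * E * diagonal (exp ∘ β)) *ᵥ 1 = B *ᵥ 1 := by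
  ext y
  simp only [mulVec, dotProduct, Pi.one_apply, mul_one, mul_diagonal, diagonal_mul,
    Function.comp_apply, ← sum_mul_exp_eq_of_forall_sinkhornDual_le hmin y, exp_add]
  exact Finset.sum_congr rfl fun x _ => by ring

lemma transpose_mulVec_one_eq_of_forall_sinkhornDual_le {E B : Matrix m n ℝ} {α : m → ℝ}
    {β : n → ℝ} (hmin : ∀ β', sinkhornDual E B α β ≤ sinkhornDual E B α β') :
    (diagonal (exp ∘ α) * E * diagonal (exp ∘ β))ᵀ *ᵥ 1 = Bᵀ *ᵥ 1 := by
  rw [transpose_mul, transpose_mul, diagonal_transpose, diagonal_transpose, ← Matrix.mul_assoc]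
  exact mulVec_one_eq_of_forall_sinkhornDual_le fun β' => by
    simpa only [sinkhornDual_transpose] using hmin β'

end Sinkhorn

theorem sinkhorn_iff_pattern_matrix_general {d' d : ℕ}
    (E : Matrix (Fin d') (Fin d) ℝ) (hE : ColStochastic E)
    (p : Fin d → ℝ) (q : Fin d' → ℝ) :
    (∃ (a : Fin d' → ℝ) (b : Fin d → ℝ), (∀ y, 0 < a y) ∧ (∀ x, 0 < b x) ∧
      (Matrix.diagonal a * E * Matrix.diagonal b) *ᵥ (fun _ => 1) = q ∧
      (Matrix.diagonal a * E * Matrix.diagonal b)ᵀ *ᵥ (fun _ => 1) = p) ↔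
    (∃ B : Matrix (Fin d') (Fin d) ℝ, (∀ y x, 0 ≤ B y x) ∧
      (B *ᵥ (fun _ => 1) = q) ∧ (Bᵀ *ᵥ (fun _ => 1) = p) ∧
      (∀ y x, 0 < E y x → 0 < B y x) ∧ (∀ y x, E y x = 0 → B y x = 0)) := by
  constructor
  · rintro ⟨a, b, ha, hb, hrow, hcol⟩
    have hentry : ∀ y x, (diagonal a * E * diagonal b) y x = a y * E y x * b x := by
      simp [mul_diagonal, diagonal_mul]
    refine ⟨_, fun y x => ?_, hrow, hcol, fun y x hyx => ?_, fun y x hyx => ?_⟩ <;>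
      rw [hentry]
    · exact mul_nonneg (mul_nonneg (ha y).le (hE.1 y x)) (hb x).le
    · exact mul_pos (mul_pos (ha y) hyx) (hb x)
    · rw [hyx, mul_zero, zero_mul]
  · rintro ⟨B, -, rfl, rfl, hEB, hBE⟩
    obtain ⟨α, β, hmin⟩ := exists_forall_sinkhornDual_le hE.1 hEB hBE
    exact ⟨exp ∘ α, exp ∘ β, fun _ => exp_pos _, fun _ => exp_pos _,
      mulVec_one_eq_of_forall_sinkhornDual_le fun α' => hmin α' β,
      transpose_mulVec_one_eq_of_forall_sinkhornDual_le fun β' => hmin α β'⟩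

theorem sinkhorn_iff_pattern_matrix {d' d : ℕ}
    (E : Matrix (Fin d') (Fin d) ℝ) (hE : ColStochastic E)
    (p : Fin d → ℝ) (hp : ProbVec p) (q : Fin d' → ℝ) (hq : ProbVec q) :
    (∃ (a : Fin d' → ℝ) (b : Fin d → ℝ), (∀ y, 0 < a y) ∧ (∀ x, 0 < b x) ∧
      (Matrix.diagonal a * E * Matrix.diagonal b) *ᵥ (fun _ => 1) = q ∧
      (Matrix.diagonal a * E * Matrix.diagonal b)ᵀ *ᵥ (fun _ => 1) = p) ↔
    (∃ B : Matrix (Fin d') (Fin d) ℝ, (∀ y x, 0 ≤ B y x) ∧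
      (B *ᵥ (fun _ => 1) = q) ∧ (Bᵀ *ᵥ (fun _ => 1) = p) ∧
      (∀ y x, 0 < E y x → 0 < B y x) ∧ (∀ y x, E y x = 0 → B y x = 0)) :=
  sinkhorn_iff_pattern_matrix_general E hE p q
end

section
/- Let E ∈ ℝ^{d'×d} be a column-stochastic matrix. The following three statements are equivalent: (1) for every probability vector γ ∈ Δ^{d-1}, every entry of Eγ is positive (i.e. the Bayes map Ê_γ is well defined for every prior γ); (2) every entry of E is positive; (3) for every pair of probability vectors p ∈ Δ^{d-1} and q ∈ Δ^{d'-1}, there exists γ ∈ Δ^{d-1} such that Eγ has all entries positive and Ê_γ q = p. -/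
/-!
Positivity of `E` is necessary because `E *ᵥ eₓ` is the `x`-th column of `E`, and sufficient
because `E *ᵥ γ` is then a convex combination of positive columns.

For the hacking prior, maximise the likelihood ratio `H γ = ∏ₓ γₓ ^ pₓ / ∏ᵧ (E γ)ᵧ ^ qᵧ`
(`bayesPotential`) over the simplex, which is compact and on which `H` is continuous because
`E γ > 0` there. Since `H p > 0`, a maximiser `γ` charges every `x` with `pₓ > 0`, and for `γₓ > 0`
the segment from `γ` towards the vertex `eₓ` extends on both sides of `γ`, so `log H` is
stationary along it: `pₓ / γₓ = ∑ᵧ qᵧ E_{yx} / (E γ)ᵧ`, which says `(Ê_γ q)ₓ = pₓ`.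

Conversely, take `p = eₓ` and `q` uniform: every column of `E` is nonzero, so `(Ê_γ q)_z = 0`
forces `γ_z = 0`; hence `γ = eₓ` and `E *ᵥ γ`, the `x`-th column of `E`, is positive.
-/

open Matrix BigOperators

/-- The Bayes map `Ê_γ = D_γ Eᵀ D_{Eγ}⁻¹`, entrywise `(Ê_γ)_{x,y} = E_{y,x} γ_x / (Eγ)_y`. -/
noncomputable def bayesMap {d' d : ℕ} (E : Matrix (Fin d') (Fin d) ℝ) (γ : Fin d → ℝ) :
    Matrix (Fin d) (Fin d') ℝ :=
  Matrix.of fun x y => E y x * γ x / (E *ᵥ γ) y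

open Finset Real

lemma exists_pos_of_sum_eq_one {ι : Type*} [Fintype ι] {f : ι → ℝ} (h : ∑ i, f i = 1) :
    ∃ i, 0 < f i := by
  obtain ⟨i, -, hi⟩ := exists_lt_of_sum_lt (s := univ) (f := 0) (g := f) (by simp [h])
  exact ⟨i, hi⟩

lemma hasDerivAt_sum_mul_log_add_mul {ι : Type*} [Fintype ι] (c a b : ι → ℝ)
    (hab : ∀ i, a i = 0 → b i = 0) :
    HasDerivAt (fun t => ∑ i, c i * log (a i + t * b i)) (∑ i, c i * b i / a i) 0 := by
  refine HasDerivAt.fun_sum fun i _ => ?_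
  rw [mul_div_assoc]
  refine HasDerivAt.const_mul (c i) ?_
  by_cases ha : a i = 0
  -- the term is then constant, and the formula reads `0 / 0 = 0`
  · simpa [ha, hab i ha] using hasDerivAt_const (0 : ℝ) (log 0)
  · simpa using ((hasDerivAt_mul_const (x := 0) (b i)).const_add (a i)).log (by simpa using ha)

section Simplex

variable {ι : Type*} [DecidableEq ι]

lemma add_smul_single_sub_apply (γ : ι → ℝ) (x z : ι) (t : ℝ) :
    (γ + t • (Pi.single x 1 - γ) : ι → ℝ) z = (1 - t) * γ z + if z = x then t else 0 := by
  by_cases hz : z = x <;> simp [hz] <;> ring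

variable [Fintype ι]

lemma pos_add_smul_single_sub {γ : ι → ℝ} (hγ : γ ∈ stdSimplex ℝ ι) {x : ι} {t : ℝ}
    (ht : t ∈ Set.Ioo (-γ x) 1) {z : ι} (hz : 0 < γ z) :
    0 < (γ + t • (Pi.single x 1 - γ) : ι → ℝ) z := by
  have hγx := (mem_Icc_of_mem_stdSimplex hγ x).2
  rw [add_smul_single_sub_apply]
  split_ifs with hzx
  · subst hzx; nlinarith [ht.1, ht.2]
  · nlinarith [ht.2]

lemma add_smul_single_sub_mem_stdSimplex {γ : ι → ℝ} (hγ : γ ∈ stdSimplex ℝ ι) {x : ι} {t : ℝ}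
    (ht : t ∈ Set.Ioo (-γ x) 1) : γ + t • (Pi.single x 1 - γ) ∈ stdSimplex ℝ ι := by
  refine ⟨fun z => ?_, ?_⟩
  · rcases (hγ.1 z).eq_or_lt with hz | hz
    · rw [add_smul_single_sub_apply, ← hz]
      split_ifs with hzx
      · subst hzx; linarith [ht.1]
      · simp
    · exact (pos_add_smul_single_sub hγ ht hz).le
  · simp [sum_add_distrib, ← mul_sum, sum_sub_distrib, hγ.2]

end Simplex

section Stochastic

variable {d' d : ℕ}

lemma mulVec_pos_of_pos {E : Matrix (Fin d') (Fin d) ℝ} (hE : ∀ y x, 0 < E y x)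
    {γ : Fin d → ℝ} (hγ : ProbVec γ) (y : Fin d') : 0 < (E *ᵥ γ) y := by
  obtain ⟨x, hx⟩ := exists_pos_of_sum_eq_one hγ.2
  exact sum_pos' (fun z _ => mul_nonneg (hE y z).le (hγ.1 z)) ⟨x, mem_univ x, mul_pos (hE y x) hx⟩

lemma pos_of_forall_mulVec_pos {E : Matrix (Fin d') (Fin d) ℝ}
    (h : ∀ γ, ProbVec γ → ∀ y, 0 < (E *ᵥ γ) y) (y : Fin d') (x : Fin d) : 0 < E y x := by
  -- `ProbVec γ` unfolds to `γ ∈ stdSimplex ℝ (Fin d)`, here and below.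
  simpa using h _ (single_mem_stdSimplex ℝ x) y

lemma bayesMap_mulVec_apply (E : Matrix (Fin d') (Fin d) ℝ) (γ : Fin d → ℝ) (q : Fin d' → ℝ)
    (x : Fin d) : (bayesMap E γ *ᵥ q) x = γ x * ∑ y, q y * E y x / (E *ᵥ γ) y := by
  simp only [mulVec, dotProduct, bayesMap, of_apply, mul_sum]
  exact sum_congr rfl fun y _ => by ring

lemma ColStochastic.bayesMap_mulVec_eq_zero_iff {E : Matrix (Fin d') (Fin d) ℝ}
    (hE : ColStochastic E) {γ : Fin d → ℝ} (hEγ : ∀ y, 0 < (E *ᵥ γ) y) {q : Fin d' → ℝ}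
    (hq : ∀ y, 0 < q y) (x : Fin d) : (bayesMap E γ *ᵥ q) x = 0 ↔ γ x = 0 := by
  obtain ⟨y, hy⟩ := exists_pos_of_sum_eq_one (hE.2 x)
  have hsum : 0 < ∑ y, q y * E y x / (E *ᵥ γ) y :=
    sum_pos' (fun z _ => div_nonneg (mul_nonneg (hq z).le (hE.1 z x)) (hEγ z).le)
      ⟨y, mem_univ y, div_pos (mul_pos (hq y) hy) (hEγ y)⟩
  rw [bayesMap_mulVec_apply, mul_eq_zero, or_iff_left hsum.ne']

lemma ColStochastic.pos_of_forall_exists_bayesMap_mulVec_eq {E : Matrix (Fin d') (Fin d) ℝ}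
    (hE : ColStochastic E)
    (h : ∀ (p : Fin d → ℝ) (q : Fin d' → ℝ), ProbVec p → ProbVec q →
      ∃ γ : Fin d → ℝ, ProbVec γ ∧ (∀ y, 0 < (E *ᵥ γ) y) ∧ bayesMap E γ *ᵥ q = p)
    (y : Fin d') (x : Fin d) : 0 < E y x := by
  have hd' : (0 : ℝ) < d' := Nat.cast_pos.mpr (Fin.pos y)
  have huniform : ProbVec fun _ : Fin d' => (d' : ℝ)⁻¹ :=
    ⟨fun _ => by positivity, by simp [hd'.ne']⟩
  obtain ⟨γ, hγ, hEγ, hγx⟩ := h _ _ (single_mem_stdSimplex ℝ x) huniform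
  have hzero : ∀ z, z ≠ x → γ z = 0 := fun z hz =>
    (hE.bayesMap_mulVec_eq_zero_iff hEγ (fun _ => inv_pos.mpr hd') z).mp (by simp [hγx, hz])
  have hγ_eq : γ = Pi.single x 1 := by
    have hone : γ x = 1 := by
      rw [← hγ.2, sum_eq_single x (fun z _ hz => hzero z hz) (by simp)]
    funext z
    by_cases hz : z = x
    · simp [hz, hone]
    · simp [hz, hzero z hz]
  simpa [hγ_eq] using hEγ y

end Stochastic

section Potential

variable {d' d : ℕ} (E : Matrix (Fin d') (Fin d) ℝ) (p : Fin d → ℝ) (q : Fin d' → ℝ)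

noncomputable def bayesPotential (γ : Fin d → ℝ) : ℝ :=
  (∏ x, γ x ^ p x) / ∏ y, (E *ᵥ γ) y ^ q y

noncomputable def logBayesPotential (γ : Fin d → ℝ) : ℝ :=
  ∑ x, p x * log (γ x) - ∑ y, q y * log ((E *ᵥ γ) y)

variable {E p q}

lemma continuousOn_bayesPotential (hp : ∀ x, 0 ≤ p x) (hq : ∀ y, 0 ≤ q y)
    {s : Set (Fin d → ℝ)} (hs : ∀ γ ∈ s, ∀ y, 0 < (E *ᵥ γ) y) :
    ContinuousOn (bayesPotential E p q) s := by
  refine ContinuousOn.div (Continuous.continuousOn ?_) (Continuous.continuousOn ?_)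
    fun γ hγ => (prod_pos fun y _ => rpow_pos_of_pos (hs γ hγ y) (q y)).ne'
  · exact continuous_finsetProd _ fun x _ =>
      (continuous_rpow_const (hp x)).comp (continuous_apply x)
  · exact continuous_finsetProd _ fun y _ =>
      (continuous_rpow_const (hq y)).comp
        ((continuous_apply y).comp (continuous_const.matrix_mulVec continuous_id))

lemma bayesPotential_self_pos (hp : ∀ x, 0 ≤ p x) (hEp : ∀ y, 0 < (E *ᵥ p) y) :
    0 < bayesPotential E p q p := by
  refine div_pos (prod_pos fun x _ => ?_) (prod_pos fun y _ => rpow_pos_of_pos (hEp y) _)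
  rcases (hp x).eq_or_lt with hx | hx
  · simp [← hx]
  · exact rpow_pos_of_pos hx _

lemma ne_zero_of_bayesPotential_pos {γ : Fin d → ℝ} (hγ : 0 < bayesPotential E p q γ) {x : Fin d}
    (hx : 0 < p x) : γ x ≠ 0 := by
  intro hγx
  have : ∏ z, γ z ^ p z = 0 := prod_eq_zero (mem_univ x) (by rw [hγx, zero_rpow hx.ne'])
  simp [bayesPotential, this] at hγ

lemma bayesPotential_eq_exp_logBayesPotential (hp : ∀ x, 0 ≤ p x) {γ : Fin d → ℝ}
    (hγ : ∀ x, 0 < p x → 0 < γ x) (hEγ : ∀ y, 0 < (E *ᵥ γ) y) :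
    bayesPotential E p q γ = exp (logBayesPotential E p q γ) := by
  have hnum : ∏ x, γ x ^ p x = exp (∑ x, p x * log (γ x)) := by
    rw [exp_sum]
    refine prod_congr rfl fun x _ => ?_
    rcases (hp x).eq_or_lt with hx | hx
    · simp [← hx]
    · rw [rpow_def_of_pos (hγ x hx), mul_comm]
  have hden : ∏ y, (E *ᵥ γ) y ^ q y = exp (∑ y, q y * log ((E *ᵥ γ) y)) := by
    rw [exp_sum]
    exact prod_congr rfl fun y _ => by rw [rpow_def_of_pos (hEγ y), mul_comm]
  rw [bayesPotential, logBayesPotential, hnum, hden, exp_sub]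

lemma hasDerivAt_logBayesPotential_add_smul {γ v : Fin d → ℝ} (hv : ∀ x, γ x = 0 → v x = 0)
    (hEγ : ∀ y, (E *ᵥ γ) y ≠ 0) :
    HasDerivAt (fun t : ℝ => logBayesPotential E p q (γ + t • v))
      (∑ x, p x * v x / γ x - ∑ y, q y * (E *ᵥ v) y / (E *ᵥ γ) y) 0 := by
  have h := (hasDerivAt_sum_mul_log_add_mul p γ v hv).fun_sub
    (hasDerivAt_sum_mul_log_add_mul q (E *ᵥ γ) (E *ᵥ v) fun y h => absurd h (hEγ y))
  refine h.congr_of_eventuallyEq (Filter.Eventually.of_forall fun t => ?_)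
  simp [logBayesPotential, mulVec_add, mulVec_smul]

end Potential

section Hacking

variable {d' d : ℕ} {E : Matrix (Fin d') (Fin d) ℝ} {p : Fin d → ℝ} {q : Fin d' → ℝ}

lemma IsMaxOn.div_eq_sum_of_bayesPotential (hp : ProbVec p) (hq : ProbVec q)
    {γ : Fin d → ℝ} (hγ : γ ∈ stdSimplex ℝ (Fin d))
    (hmax : IsMaxOn (bayesPotential E p q) (stdSimplex ℝ (Fin d)) γ)
    (hpos : ∀ γ ∈ stdSimplex ℝ (Fin d), ∀ y, 0 < (E *ᵥ γ) y)
    (hsupp : ∀ z, 0 < p z → 0 < γ z) {x : Fin d} (hx : 0 < γ x) :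
    p x / γ x = ∑ y, q y * E y x / (E *ᵥ γ) y := by
  set v : Fin d → ℝ := Pi.single x 1 - γ
  have hloc : IsLocalMax (fun t : ℝ => logBayesPotential E p q (γ + t • v)) 0 := by
    filter_upwards [Ioo_mem_nhds (neg_lt_zero.2 hx) one_pos] with t ht
    have hmem := add_smul_single_sub_mem_stdSimplex hγ ht
    rw [zero_smul, add_zero, ← exp_le_exp,
      ← bayesPotential_eq_exp_logBayesPotential hp.1 hsupp (hpos γ hγ),
      ← bayesPotential_eq_exp_logBayesPotential hp.1
        (fun z hz => pos_add_smul_single_sub hγ ht (hsupp z hz)) (hpos _ hmem)]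
    exact hmax hmem
  have hv : ∀ z, γ z = 0 → v z = 0 := fun z hz => by
    have hzx : z ≠ x := fun h => hx.ne' (h ▸ hz)
    simp [v, hz, hzx]
  have hderiv := hloc.hasDerivAt_eq_zero
    (hasDerivAt_logBayesPotential_add_smul hv fun y => (hpos γ hγ y).ne')
  have hsum_p : ∑ z, p z * v z / γ z = p x / γ x - 1 := by
    have hterm : ∀ z, p z * v z / γ z = (if z = x then p x / γ x else 0) - p z := fun z => by
      rcases (hγ.1 z).eq_or_lt with hz | hz
      · have hzx : z ≠ x := fun h => hx.ne' (h ▸ hz.symm)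
        have hpz : p z = 0 := (hp.1 z).antisymm' (not_lt.1 fun h => (hsupp z h).ne hz)
        simp [v, hzx, hpz]
      · by_cases hzx : z = x
        · subst hzx
          simp only [v, Pi.sub_apply, Pi.single_eq_same, if_true]
          field_simp
        · simp only [v, Pi.sub_apply, Pi.single_eq_of_ne hzx, if_neg hzx, zero_sub]
          field_simp
    simp [hterm, sum_sub_distrib, hp.2]
  have hsum_q : ∑ y, q y * (E *ᵥ v) y / (E *ᵥ γ) y = ∑ y, q y * E y x / (E *ᵥ γ) y - 1 := by
    rw [← hq.2, ← sum_sub_distrib]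
    refine sum_congr rfl fun y _ => ?_
    simp only [v, mulVec_sub, mulVec_single_one, Pi.sub_apply, col_apply]
    field_simp [(hpos γ hγ y).ne']
  linarith

theorem exists_bayesMap_mulVec_eq (hpos : ∀ γ, ProbVec γ → ∀ y, 0 < (E *ᵥ γ) y)
    (hp : ProbVec p) (hq : ProbVec q) :
    ∃ γ, ProbVec γ ∧ (∀ y, 0 < (E *ᵥ γ) y) ∧ bayesMap E γ *ᵥ q = p := by
  obtain ⟨γ, hγ, hmax⟩ := (isCompact_stdSimplex ℝ (Fin d)).exists_isMaxOn ⟨p, hp⟩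
    (continuousOn_bayesPotential hp.1 hq.1 hpos)
  have hγ_pos : 0 < bayesPotential E p q γ :=
    (bayesPotential_self_pos hp.1 (hpos p hp)).trans_le (hmax hp)
  have hsupp : ∀ z, 0 < p z → 0 < γ z := fun z hz =>
    (hγ.1 z).lt_of_ne' (ne_zero_of_bayesPotential_pos hγ_pos hz)
  refine ⟨γ, hγ, hpos γ hγ, funext fun x => ?_⟩
  rw [bayesMap_mulVec_apply]
  rcases (hγ.1 x).eq_or_lt with hx | hx
  · rw [← hx, zero_mul]
    exact ((hp.1 x).antisymm' (not_lt.1 fun h => (hsupp x h).ne hx)).symm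
  · rw [← hmax.div_eq_sum_of_bayesPotential hp hq hγ hpos hsupp hx, mul_div_cancel₀ _ hx.ne']

end Hacking

theorem always_prior_hackable_iff_positive_entries {d' d : ℕ}
    (E : Matrix (Fin d') (Fin d) ℝ) (hE : ColStochastic E) :
    ((∀ γ : Fin d → ℝ, ProbVec γ → ∀ y, 0 < (E *ᵥ γ) y) ↔ (∀ y x, 0 < E y x)) ∧
    ((∀ y x, 0 < E y x) ↔
      (∀ (p : Fin d → ℝ) (q : Fin d' → ℝ), ProbVec p → ProbVec q →
        ∃ γ : Fin d → ℝ, ProbVec γ ∧ (∀ y, 0 < (E *ᵥ γ) y) ∧ (bayesMap E γ) *ᵥ q = p)) :=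
  ⟨⟨pos_of_forall_mulVec_pos, fun hpos _ hγ => mulVec_pos_of_pos hpos hγ⟩,
    ⟨fun hpos _ _ hp hq => exists_bayesMap_mulVec_eq (fun _ hγ => mulVec_pos_of_pos hpos hγ) hp hq,
      hE.pos_of_forall_exists_bayesMap_mulVec_eq⟩⟩
end

section
/- Let E ∈ ℝ^{d'×d} be a column-stochastic matrix, let p ∈ Δ^{d-1} and q ∈ Δ^{d'-1} be probability vectors with all entries of p positive, and suppose γ ∈ ℝ^{d} and γ̂ ∈ ℝ^{d'} are entrywise positive vectors satisfying the Schrödinger system (Eᵀγ̂) ⊙ γ = p and γ̂ ⊙ (Eγ) = q, where ⊙ is entrywise multiplication. Define the Schrödinger-bridge transition matrix F := D_{γ̂} E D_{Eᵀγ̂}^{-1}. Then F is column-stochastic, F p = q, and the Bayes map of F with prior p equals the Bayes map of E with prior (the normalization of) γ, i.e. D_p Fᵀ D_{Fp}^{-1} = D_γ Eᵀ D_{Eγ}^{-1}. -/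
open Matrix BigOperators

theorem schrodinger_bridge_bayes_duality {d' d : ℕ}
    (E : Matrix (Fin d') (Fin d) ℝ) (hE : ColStochastic E)
    (p : Fin d → ℝ) (hp : ProbVec p) (hppos : ∀ x, 0 < p x)
    (q : Fin d' → ℝ) (hq : ProbVec q)
    (γ : Fin d → ℝ) (γhat : Fin d' → ℝ)
    (hγ : ∀ x, 0 < γ x) (hγhat : ∀ y, 0 < γhat y)
    (hsys1 : ∀ x, (Eᵀ *ᵥ γhat) x * γ x = p x)
    (hsys2 : ∀ y, γhat y * (E *ᵥ γ) y = q y) :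
    letI F : Matrix (Fin d') (Fin d) ℝ :=
      Matrix.diagonal γhat * E * Matrix.diagonal (fun x => ((Eᵀ *ᵥ γhat) x)⁻¹)
    ColStochastic F ∧ F *ᵥ p = q ∧
      Matrix.diagonal p * Fᵀ * Matrix.diagonal (fun y => ((F *ᵥ p) y)⁻¹) =
        Matrix.diagonal γ * Eᵀ * Matrix.diagonal (fun y => ((E *ᵥ γ) y)⁻¹) := by
  set F : Matrix (Fin d') (Fin d) ℝ :=
      Matrix.diagonal γhat * E * Matrix.diagonal (fun x => ((Eᵀ *ᵥ γhat) x)⁻¹) with hFdef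
  obtain ⟨hEnn, hEsum⟩ := hE
  have hTpos : ∀ x, 0 < (Eᵀ *ᵥ γhat) x := by
    intro x
    have h := hsys1 x
    have := hppos x
    have := hγ x
    nlinarith
  have hF : ∀ y x, F y x = γhat y * E y x * ((Eᵀ *ᵥ γhat) x)⁻¹ := by
    intro y x
    simp [F, Matrix.mul_apply, Matrix.diagonal_apply, Finset.sum_ite_eq,
      Finset.mul_sum, mul_comm, mul_assoc]
  have hT : ∀ x, (Eᵀ *ᵥ γhat) x = ∑ y, γhat y * E y x := by
    intro x
    simp [Matrix.mulVec, dotProduct, Matrix.transpose_apply, mul_comm]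
  have hFp : F *ᵥ p = q := by
    funext y
    have : (F *ᵥ p) y = ∑ x, F y x * p x := by
      simp [Matrix.mulVec, dotProduct]
    rw [this]
    have : ∀ x, F y x * p x = γhat y * (E y x * γ x) := by
      intro x
      rw [hF, ← hsys1 x]
      have hne := (hTpos x).ne'
      field_simp
    rw [Finset.sum_congr rfl fun x _ => this x, ← Finset.mul_sum, ← hsys2 y]
    congr 1
  refine ⟨⟨?_, ?_⟩, hFp, ?_⟩
  · intro y x
    rw [hF]
    exact mul_nonneg (mul_nonneg (hγhat y).le (hEnn y x)) (inv_nonneg.2 (hTpos x).le)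
  · intro x
    have : ∑ y, F y x = (∑ y, γhat y * E y x) * ((Eᵀ *ᵥ γhat) x)⁻¹ := by
      rw [Finset.sum_mul]
      exact Finset.sum_congr rfl fun y _ => hF y x
    rw [this, ← hT x, mul_inv_cancel₀ (hTpos x).ne']
  · funext x y
    have hq' : (E *ᵥ γ) y = q y * (γhat y)⁻¹ := by
      rw [← hsys2 y]
      have hne := (hγhat y).ne'
      field_simp
    have hlhs : (Matrix.diagonal p * Fᵀ * Matrix.diagonal (fun y => ((F *ᵥ p) y)⁻¹)) x y
        = p x * F y x * ((F *ᵥ p) y)⁻¹ := by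
      simp [Matrix.mul_apply, Matrix.diagonal_apply, Finset.sum_ite_eq,
        Matrix.transpose_apply, Finset.mul_sum]
    have hrhs : (Matrix.diagonal γ * Eᵀ * Matrix.diagonal (fun y => ((E *ᵥ γ) y)⁻¹)) x y
        = γ x * E y x * ((E *ᵥ γ) y)⁻¹ := by
      simp [Matrix.mul_apply, Matrix.diagonal_apply, Finset.sum_ite_eq,
        Matrix.transpose_apply, Finset.mul_sum]
    rw [hlhs, hrhs, hFp, hF, ← hsys1 x, hq', mul_inv, inv_inv]
    have hne := (hTpos x).ne'
    linear_combination (γ x * γhat y * E y x * (q y)⁻¹) * mul_inv_cancel₀ hne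
end

section
/- Let E ∈ ℝ^{d'×d} be a column-stochastic matrix, let p ∈ Δ^{d-1} and q ∈ Δ^{d'-1} be probability vectors with all entries of p positive, and suppose γ ∈ ℝ^{d} and γ̂ ∈ ℝ^{d'} are entrywise positive vectors satisfying (Eᵀγ̂) ⊙ γ = p and γ̂ ⊙ (Eγ) = q. Then the Schrödinger-bridge transition matrix F := D_{γ̂} E D_{Eᵀγ̂}^{-1} and the Bayes map Ê_γ := D_γ Eᵀ D_{Eγ}^{-1} satisfy, for every x ∈ {1,…,d} and y ∈ {1,…,d'}, the relation F_{y,x} = (Ê_γ)_{x,y} · q_y / p_x. -/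
open Matrix BigOperators

theorem schrodinger_bridge_from_bayes_map {d' d : ℕ}
    (E : Matrix (Fin d') (Fin d) ℝ) (hE : ColStochastic E)
    (p : Fin d → ℝ) (hp : ProbVec p) (hppos : ∀ x, 0 < p x)
    (q : Fin d' → ℝ) (hq : ProbVec q)
    (γ : Fin d → ℝ) (γhat : Fin d' → ℝ)
    (hγ : ∀ x, 0 < γ x) (hγhat : ∀ y, 0 < γhat y)
    (hsys1 : ∀ x, (Eᵀ *ᵥ γhat) x * γ x = p x)
    (hsys2 : ∀ y, γhat y * (E *ᵥ γ) y = q y) :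
    ∀ (y : Fin d') (x : Fin d),
      (Matrix.diagonal γhat * E * Matrix.diagonal (fun x' => ((Eᵀ *ᵥ γhat) x')⁻¹)) y x =
        bayesMap E γ x y * q y / p x := by
  intro y x
  have hEγhat : 0 < (Eᵀ *ᵥ γhat) x := by
    have h := hsys1 x
    nlinarith [hppos x, hγ x, mul_pos (hppos x) (inv_pos.mpr (hγ x))]
  rw [Matrix.mul_diagonal, Matrix.diagonal_mul]
  simp only [bayesMap, Matrix.of_apply]
  by_cases h0 : (E *ᵥ γ) y = 0
  · have hExy : E y x = 0 := by
      have hsum : ∑ x', E y x' * γ x' = 0 := by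
        simpa [Matrix.mulVec, dotProduct] using h0
      have := (Finset.sum_eq_zero_iff_of_nonneg (fun i _ =>
        mul_nonneg (hE.1 y i) (hγ i).le)).mp hsum x (Finset.mem_univ x)
      exact (mul_eq_zero.mp this).resolve_right (hγ x).ne'
    simp [hExy, h0]
  · have hq0 : q y = γhat y * (E *ᵥ γ) y := (hsys2 y).symm
    have hp0 : p x = (Eᵀ *ᵥ γhat) x * γ x := (hsys1 x).symm
    rw [hq0, hp0]
    field_simp [h0, (hγ x).ne', hEγhat.ne']
end

section
/- Let E be a quantum channel on n×n complex matrices with Kraus operators K_i, and let ρ, ω, γ be density matrices such that ρ, ω, γ and E(γ) are all positive definite and such that the Petz recovery map satisfies P_{E,γ}(ω) = ρ. Define the linear map F on n×n matrices by F(X) := √ω · E(γ)^{-1/2} · E( √γ · ρ^{-1/2} X ρ^{-1/2} · √γ ) · E(γ)^{-1/2} · √ω. Then (a) F(ρ) = ω; (b) F is trace-preserving, i.e. Tr(F(X)) = Tr(X) for all X; and (c) the Petz recovery map of F with prior ρ equals the Petz recovery map of E with prior γ: for every n×n matrix Y, √ρ · F†( ω^{-1/2} Y ω^{-1/2} ) ·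 √ρ = √γ · E†( E(γ)^{-1/2} Y E(γ)^{-1/2} ) · √γ. -/
open Matrix BigOperators
open scoped ComplexOrder Classical

/-- Positive-semidefinite matrix square root (0 if the matrix is not psd). -/
noncomputable def msqrt {n : ℕ} (A : Matrix (Fin n) (Fin n) ℂ) : Matrix (Fin n) (Fin n) ℂ :=
  if h : A.PosSemidef then
    (h.1.eigenvectorUnitary : Matrix (Fin n) (Fin n) ℂ) *
      diagonal ((↑) ∘ Real.sqrt ∘ h.1.eigenvalues) *
      (star h.1.eigenvectorUnitary : Matrix (Fin n) (Fin n) ℂ)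
  else 0

/-- The quantum channel with Kraus operators `K i`: `E(X) = ∑ i, K i * X * (K i)ᴴ`. -/
noncomputable def kchan {n m : ℕ} (K : Fin m → Matrix (Fin n) (Fin n) ℂ)
    (X : Matrix (Fin n) (Fin n) ℂ) : Matrix (Fin n) (Fin n) ℂ :=
  ∑ i, K i * X * (K i)ᴴ

/-- The adjoint channel: `E†(Y) = ∑ i, (K i)ᴴ * Y * K i`. -/
noncomputable def kchanAdj {n m : ℕ} (K : Fin m → Matrix (Fin n) (Fin n) ℂ)
    (Y : Matrix (Fin n) (Fin n) ℂ) : Matrix (Fin n) (Fin n) ℂ :=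
  ∑ i, (K i)ᴴ * Y * K i

/-- Density matrix: positive semidefinite with trace 1. -/
def IsDensity {n : ℕ} (ρ : Matrix (Fin n) (Fin n) ℂ) : Prop :=
  ρ.PosSemidef ∧ ρ.trace = 1

/-- The Petz recovery map of the Kraus channel `K` with prior `γ`:
`P_{E,γ}(ω) = √γ · E†( E(γ)^{-1/2} ω E(γ)^{-1/2} ) · √γ`. -/
noncomputable def petz {n m : ℕ} (K : Fin m → Matrix (Fin n) (Fin n) ℂ)
    (γ ω : Matrix (Fin n) (Fin n) ℂ) : Matrix (Fin n) (Fin n) ℂ :=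
  msqrt γ * kchanAdj K ((msqrt (kchan K γ))⁻¹ * ω * (msqrt (kchan K γ))⁻¹) * msqrt γ

/- ### auxiliary lemmas -/

lemma msqrt_mul_self {n : ℕ} {A : Matrix (Fin n) (Fin n) ℂ} (h : A.PosSemidef) :
    msqrt A * msqrt A = A := by
  rw [msqrt, dif_pos h]
  have hU : (star h.1.eigenvectorUnitary : Matrix (Fin n) (Fin n) ℂ) *
      (h.1.eigenvectorUnitary : Matrix (Fin n) (Fin n) ℂ) = 1 :=
    Unitary.star_mul_self_of_mem h.1.eigenvectorUnitary.2
  have hD : diagonal (((↑) : ℝ → ℂ) ∘ Real.sqrt ∘ h.1.eigenvalues) *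
      diagonal ((↑) ∘ Real.sqrt ∘ h.1.eigenvalues) = diagonal (RCLike.ofReal ∘ h.1.eigenvalues) := by
    rw [diagonal_mul_diagonal]
    congr 1; funext i
    simp only [Function.comp_apply, ← Complex.ofReal_mul,
      Real.mul_self_sqrt (h.eigenvalues_nonneg i)]
    rfl
  conv_rhs => rw [h.1.spectral_theorem, Unitary.conjStarAlgAut_apply]
  rw [← hD]
  simp only [Matrix.mul_assoc]
  rw [← Matrix.mul_assoc (star _ : Matrix (Fin n) (Fin n) ℂ) _ (diagonal _ * _), hU, Matrix.one_mul]

lemma msqrt_herm {n : ℕ} {A : Matrix (Fin n) (Fin n) ℂ} (h : A.PosSemidef) :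
    (msqrt A)ᴴ = msqrt A := by
  rw [msqrt, dif_pos h]
  have hd : star (((↑) : ℝ → ℂ) ∘ Real.sqrt ∘ h.1.eigenvalues) = (↑) ∘ Real.sqrt ∘ h.1.eigenvalues := by
    funext i; simp
  simp only [Matrix.conjTranspose_mul, diagonal_conjTranspose, hd, Matrix.mul_assoc]
  simp [← Matrix.star_eq_conjTranspose]

lemma msqrt_det {n : ℕ} {A : Matrix (Fin n) (Fin n) ℂ} (h : A.PosDef) :
    IsUnit (msqrt A).det := by
  have h2 : (msqrt A).det * (msqrt A).det = A.det := by
    rw [← Matrix.det_mul, msqrt_mul_self h.posSemidef]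
  have hA : A.det ≠ 0 := h.det_pos.ne'
  exact isUnit_iff_ne_zero.2 fun hz => hA (by rw [← h2, hz, mul_zero])

lemma kadj_conj {n m : ℕ} (K : Fin m → Matrix (Fin n) (Fin n) ℂ)
    (X : Matrix (Fin n) (Fin n) ℂ) : (kchanAdj K X)ᴴ = kchanAdj K Xᴴ := by
  simp [kchanAdj, Matrix.conjTranspose_sum, Matrix.conjTranspose_mul, Matrix.mul_assoc]

lemma kswap {n m : ℕ} (K : Fin m → Matrix (Fin n) (Fin n) ℂ)
    (A B : Matrix (Fin n) (Fin n) ℂ) :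
    (A * kchan K B).trace = (kchanAdj K A * B).trace := by
  simp only [kchan, kchanAdj, Finset.mul_sum, Finset.sum_mul, Matrix.trace_sum]
  refine Finset.sum_congr rfl fun i _ => ?_
  simp only [← Matrix.mul_assoc]
  rw [Matrix.trace_mul_cycle]
  congr 1
  simp only [Matrix.mul_assoc]

lemma cyc5 {n : ℕ} (A B Z : Matrix (Fin n) (Fin n) ℂ) :
    (A * B * Z * B * A).trace = ((B * A * A * B) * Z).trace := by
  rw [show A * B * Z * B * A = (A * (B * Z)) * (B * A) from by
    simp only [Matrix.mul_assoc], Matrix.trace_mul_comm]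
  congr 1
  simp only [Matrix.mul_assoc]

lemma cyc5' {n : ℕ} (A B Z C : Matrix (Fin n) (Fin n) ℂ) :
    ((A * B * Z * B * A) * C).trace = ((B * (A * C * A) * B) * Z).trace := by
  rw [show (A * B * Z * B * A) * C = (A * (B * Z)) * (B * (A * C)) from by
    simp only [Matrix.mul_assoc], Matrix.trace_mul_comm]
  congr 1
  simp only [Matrix.mul_assoc]

lemma eq_of_trace_zero {n : ℕ} {D : Matrix (Fin n) (Fin n) ℂ}
    (h : ∀ B, (Dᴴ * B).trace = 0) : D = 0 := by
  ext i j
  have := h (Matrix.single i j 1)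
  simp [Matrix.trace, Matrix.diag, Matrix.mul_apply, Matrix.single,
    Matrix.conjTranspose_apply, ite_and, Finset.sum_ite_eq, Finset.sum_ite_eq'] at this
  simpa using congrArg (starRingEnd ℂ) this

theorem inference_consistent_bridge_properties {n m : ℕ}
    (K : Fin m → Matrix (Fin n) (Fin n) ℂ)
    (hK : ∑ i, (K i)ᴴ * K i = 1)
    (ρ ω γ : Matrix (Fin n) (Fin n) ℂ)
    (hρ : IsDensity ρ) (hω : IsDensity ω) (hγ : IsDensity γ)
    (hρpd : ρ.PosDef) (hωpd : ω.PosDef) (hγpd : γ.PosDef)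
    (hEγpd : (kchan K γ).PosDef)
    (hpetz : petz K γ ω = ρ) :
    letI F : Matrix (Fin n) (Fin n) ℂ → Matrix (Fin n) (Fin n) ℂ := fun X =>
      msqrt ω * (msqrt (kchan K γ))⁻¹ *
        kchan K (msqrt γ * (msqrt ρ)⁻¹ * X * (msqrt ρ)⁻¹ * msqrt γ) *
        (msqrt (kchan K γ))⁻¹ * msqrt ω
    F ρ = ω ∧
    (∀ X, (F X).trace = X.trace) ∧
    (∀ G : Matrix (Fin n) (Fin n) ℂ → Matrix (Fin n) (Fin n) ℂ,
      (∀ A B, (Aᴴ * F B).trace = ((G A)ᴴ * B).trace) →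
      ∀ Y, msqrt ρ * G ((msqrt ω)⁻¹ * Y * (msqrt ω)⁻¹) * msqrt ρ = petz K γ Y) := by
  set F : Matrix (Fin n) (Fin n) ℂ → Matrix (Fin n) (Fin n) ℂ := fun X =>
      msqrt ω * (msqrt (kchan K γ))⁻¹ *
        kchan K (msqrt γ * (msqrt ρ)⁻¹ * X * (msqrt ρ)⁻¹ * msqrt γ) *
        (msqrt (kchan K γ))⁻¹ * msqrt ω with hF
  set S := msqrt γ with hSdef
  set R := msqrt ρ with hRdef
  set W := msqrt ω with hWdef
  set M := msqrt (kchan K γ) with hMdef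
  have dR : IsUnit R.det := msqrt_det hρpd
  have dW : IsUnit W.det := msqrt_det hωpd
  have dM : IsUnit M.det := msqrt_det hEγpd
  have hρsq : R * R = ρ := msqrt_mul_self hρpd.posSemidef
  have hγsq : S * S = γ := msqrt_mul_self hγpd.posSemidef
  have hωsq : W * W = ω := msqrt_mul_self hωpd.posSemidef
  have hMsq : M * M = kchan K γ := msqrt_mul_self hEγpd.posSemidef
  have cRl : ∀ B, R⁻¹ * (R * B) = B := fun B => Matrix.nonsing_inv_mul_cancel_left _ B dR
  have cRr : ∀ B, R * (R⁻¹ * B) = B := fun B => Matrix.mul_nonsing_inv_cancel_left _ B dR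
  have cWr : ∀ B, W * (W⁻¹ * B) = B := fun B => Matrix.mul_nonsing_inv_cancel_left _ B dW
  have cMl : ∀ B, M⁻¹ * (M * B) = B := fun B => Matrix.nonsing_inv_mul_cancel_left _ B dM
  have cMr : ∀ B, M * (M⁻¹ * B) = B := fun B => Matrix.mul_nonsing_inv_cancel_left _ B dM
  have hRinvR : R⁻¹ * R = 1 := Matrix.nonsing_inv_mul _ dR
  have hRRinv : R * R⁻¹ = 1 := Matrix.mul_nonsing_inv _ dR
  have hWinvW : W⁻¹ * W = 1 := Matrix.nonsing_inv_mul _ dW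
  -- hermitian facts
  have hSh : Sᴴ = S := by rw [hSdef]; exact msqrt_herm hγpd.posSemidef
  have hWh : Wᴴ = W := by rw [hWdef]; exact msqrt_herm hωpd.posSemidef
  have hRih : (R⁻¹)ᴴ = R⁻¹ := by
    rw [Matrix.conjTranspose_nonsing_inv, hRdef, msqrt_herm hρpd.posSemidef]
  have hMih : (M⁻¹)ᴴ = M⁻¹ := by
    rw [Matrix.conjTranspose_nonsing_inv, hMdef, msqrt_herm hEγpd.posSemidef]
  -- part (a)
  have parta : F ρ = ω := by
    show W * M⁻¹ * kchan K (S * R⁻¹ * ρ * R⁻¹ * S) * M⁻¹ * W = ω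
    have harg : S * R⁻¹ * ρ * R⁻¹ * S = γ := by
      rw [← hρsq]; simp only [Matrix.mul_assoc, cRl, cRr, hγsq]
    rw [harg, ← hMsq]
    simp only [Matrix.mul_assoc, cMl, cMr, hωsq]
  refine ⟨parta, ?_, ?_⟩
  · -- part (b)
    intro X
    show (W * M⁻¹ * kchan K (S * R⁻¹ * X * R⁻¹ * S) * M⁻¹ * W).trace = X.trace
    have hpetz' : S * kchanAdj K (M⁻¹ * ω * M⁻¹) * S = ρ := hpetz
    have hMWWM : M⁻¹ * W * W * M⁻¹ = M⁻¹ * ω * M⁻¹ := by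
      rw [Matrix.mul_assoc M⁻¹ W W, hωsq]
    rw [cyc5 W M⁻¹ (kchan K (S * R⁻¹ * X * R⁻¹ * S)), hMWWM, kswap,
      Matrix.trace_mul_comm, cyc5' S R⁻¹ X (kchanAdj K (M⁻¹ * ω * M⁻¹)), hpetz']
    have hcan : R⁻¹ * ρ * R⁻¹ = 1 := by
      rw [← hρsq]; simp only [Matrix.mul_assoc, cRl, hRRinv]
    rw [hcan, Matrix.one_mul]
  · -- part (c)
    intro G hG Y
    have hadj : ∀ A B, (Aᴴ * F B).trace =
        ((R⁻¹ * (S * kchanAdj K (M⁻¹ * (W * Aᴴ * W) * M⁻¹) * S) * R⁻¹) * B).trace := by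
      intro A B
      show (Aᴴ * (W * M⁻¹ * kchan K (S * R⁻¹ * B * R⁻¹ * S) * M⁻¹ * W)).trace = _
      rw [Matrix.trace_mul_comm, cyc5' W M⁻¹ (kchan K (S * R⁻¹ * B * R⁻¹ * S)) Aᴴ, kswap,
        Matrix.trace_mul_comm, cyc5' S R⁻¹ B (kchanAdj K (M⁻¹ * (W * Aᴴ * W) * M⁻¹))]
    have hTconj : ∀ A : Matrix (Fin n) (Fin n) ℂ,
        (R⁻¹ * (S * kchanAdj K (M⁻¹ * (W * A * W) * M⁻¹) * S) * R⁻¹)ᴴ =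
        R⁻¹ * (S * kchanAdj K (M⁻¹ * (W * Aᴴ * W) * M⁻¹) * S) * R⁻¹ := by
      intro A
      simp only [Matrix.conjTranspose_mul, kadj_conj, hSh, hWh, hRih, hMih, Matrix.mul_assoc]
    have hGT : ∀ A, G A = R⁻¹ * (S * kchanAdj K (M⁻¹ * (W * A * W) * M⁻¹) * S) * R⁻¹ := by
      intro A
      have h0 : ∀ B, ((G A -
          (R⁻¹ * (S * kchanAdj K (M⁻¹ * (W * A * W) * M⁻¹) * S) * R⁻¹))ᴴ * B).trace = 0 := by
        intro B
        rw [Matrix.conjTranspose_sub, Matrix.sub_mul, Matrix.trace_sub, ← hG A B, hTconj,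
          hadj A B, sub_self]
      exact sub_eq_zero.1 (eq_of_trace_zero h0)
    show R * G (W⁻¹ * Y * W⁻¹) * R = petz K γ Y
    rw [hGT]
    have hWcan : W * (W⁻¹ * Y * W⁻¹) * W = Y := by
      simp only [Matrix.mul_assoc, cWr, hWinvW, Matrix.mul_one]
    rw [hWcan]
    have hpetzdef : petz K γ Y = S * kchanAdj K (M⁻¹ * Y * M⁻¹) * S := rfl
    rw [hpetzdef]
    simp only [Matrix.mul_assoc, cRr, hRinvR, Matrix.mul_one]
end
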